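/- arXiv:1309.0357 — 2 statements merged into one kernel-verified Lean document; each statement's English description precedes it below -/
import Mathlib

section
/- Let A₁, A₂ be complex (r+1)×r matrices such that A₁x₁ + A₂x₂ is injective (as a linear map ℂʳ → ℂʳ⁺¹) for every (x₁,x₂) ∈ ℂ² \ {0}. Then there exist P ∈ GL(r+1,ℂ) and Q ∈ GL(r,ℂ) such that P·A₁·Q = S and P·A₂·Q = T, where S is the matrix with S_{ij} = 1 if i = j and 0 otherwise, and T is the matrix with T_{ij} = 1 if i = j+1 and 0 otherwise. -/
open LinearMap Module

/-- Core construction: a "Kronecker chain" of vectors. -/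
theorem exists_kronecker_chain (r : ℕ) (hr : 0 < r) (A₁ A₂ : Matrix (Fin (r + 1)) (Fin r) ℂ)
    (h : ∀ x : ℂ × ℂ, x ≠ 0 →
      Function.Injective (Matrix.mulVecLin (x.1 • A₁ + x.2 • A₂))) :
    ∃ (e : Fin r → (Fin r → ℂ)) (f : Fin (r + 1) → (Fin (r + 1) → ℂ)),
      LinearIndependent ℂ f ∧
      (∀ j, A₁.mulVecLin (e j) = f j.castSucc) ∧
      (∀ j, A₂.mulVecLin (e j) = f j.succ) := by
  have hcon : ∀ (μ : ℂ) (x : Fin r → ℂ),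
      A₂.mulVecLin x = μ • A₁.mulVecLin x → x = 0 := by
    intro μ x heq
    have hinj := h (-μ, 1) (by simp [Prod.ext_iff])
    have h0 : ((-μ) • A₁ + (1 : ℂ) • A₂).mulVecLin x
        = ((-μ) • A₁ + (1 : ℂ) • A₂).mulVecLin 0 := by
      rw [map_zero]
      simp only [Matrix.mulVecLin_apply] at heq ⊢
      rw [Matrix.add_mulVec, Matrix.smul_mulVec, Matrix.smul_mulVec, heq]
      module
    exact hinj h0
  have ha₁ : Function.Injective A₁.mulVecLin := by
    have := h (1, 0) (by simp [Prod.ext_iff])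
    simpa using this
  set U : Submodule ℂ (Fin (r + 1) → ℂ) := LinearMap.range A₁.mulVecLin with hU
  have hUrank : Module.finrank ℂ U = r := by
    rw [hU, LinearMap.finrank_range_of_inj ha₁, Module.finrank_fin_fun]
  have hquot : Module.finrank ℂ ((Fin (r + 1) → ℂ) ⧸ U) = 1 := by
    have h1 := Submodule.finrank_quotient_add_finrank U
    rw [hUrank, Module.finrank_fin_fun] at h1; omega
  obtain ⟨χ⟩ : Nonempty (((Fin (r + 1) → ℂ) ⧸ U) ≃ₗ[ℂ] ℂ) :=
    FiniteDimensional.nonempty_linearEquiv_of_finrank_eq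
      (by rw [hquot, Module.finrank_self])
  set ψ : (Fin (r + 1) → ℂ) →ₗ[ℂ] ℂ := χ.toLinearMap ∘ₗ U.mkQ with hψdef
  have hkerψ : LinearMap.ker ψ = U := by
    rw [hψdef, LinearMap.ker_comp_of_ker_eq_bot _ χ.ker, Submodule.ker_mkQ]
  have hψsurj : Function.Surjective ψ := χ.surjective.comp (Submodule.mkQ_surjective U)
  obtain ⟨w, hw⟩ := hψsurj 1
  have hψa₁ : ∀ u, ψ (A₁.mulVecLin u) = 0 := by
    intro u
    have : A₁.mulVecLin u ∈ LinearMap.ker ψ := by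
      rw [hkerψ, hU]; exact LinearMap.mem_range_self _ u
    exact this
  obtain ⟨M, hMkey⟩ : ∃ M : (Fin r → ℂ) →ₗ[ℂ] (Fin r → ℂ),
      ∀ u, A₁.mulVecLin (M u) = A₂.mulVecLin u - (ψ (A₂.mulVecLin u)) • w := by
    set g : (Fin r → ℂ) →ₗ[ℂ] (Fin (r + 1) → ℂ) :=
      A₂.mulVecLin - (ψ ∘ₗ A₂.mulVecLin).smulRight w with hgdef
    have hgapp : ∀ u, g u = A₂.mulVecLin u - (ψ (A₂.mulVecLin u)) • w := fun u => rfl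
    have hgmem : ∀ u, g u ∈ U := by
      intro u
      rw [← hkerψ, LinearMap.mem_ker, hgapp, map_sub, map_smul, hw, smul_eq_mul, mul_one,
        sub_self]
    refine ⟨(LinearEquiv.ofInjective A₁.mulVecLin ha₁).symm.toLinearMap ∘ₗ
      (g.codRestrict U hgmem), fun u => ?_⟩
    rw [LinearMap.comp_apply, ← hgapp]
    have key : ∀ y : U, A₁.mulVecLin ((LinearEquiv.ofInjective A₁.mulVecLin ha₁).symm y)
        = (y : Fin (r + 1) → ℂ) := by
      intro y
      conv_rhs => rw [← (LinearEquiv.ofInjective A₁.mulVecLin ha₁).apply_symm_apply y]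
      rw [LinearEquiv.ofInjective_apply]
    rw [show ((LinearEquiv.ofInjective A₁.mulVecLin ha₁).symm.toLinearMap
        ((g.codRestrict U hgmem) u))
        = (LinearEquiv.ofInjective A₁.mulVecLin ha₁).symm ((g.codRestrict U hgmem) u) from rfl,
      key]
    rfl
  set v : (Fin r → ℂ) →ₗ[ℂ] ℂ := ψ ∘ₗ A₂.mulVecLin with hvdef
  have hdec : ∀ u, A₂.mulVecLin u = A₁.mulVecLin (M u) + v u • w := by
    intro u
    rw [hMkey u]
    simp only [hvdef, hψdef, LinearMap.comp_apply]
    rw [sub_add_cancel]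
  set Φ : (Fin r → ℂ) →ₗ[ℂ] (Fin r → ℂ) := LinearMap.pi (fun j : Fin r => v ∘ₗ (M ^ (j : ℕ)))
    with hΦdef
  have hΦapp : ∀ x (j : Fin r), Φ x j = v ((M ^ (j : ℕ)) x) := fun x j => rfl
  -- Cayley–Hamilton
  have hp := LinearMap.aeval_self_charpoly M
  set p := LinearMap.charpoly M with hpdef
  have hpdeg : p.natDegree = r := by
    rw [hpdef, LinearMap.charpoly_natDegree, Module.finrank_fin_fun]
  have hMr : (M ^ r : Module.End ℂ (Fin r → ℂ))
      = ∑ i ∈ Finset.range r, (-(p.coeff i)) • M ^ i := by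
    have h2 := Polynomial.aeval_eq_sum_range' (p := p) (n := r + 1)
      (by rw [hpdeg]; exact Nat.lt_succ_self r) M
    rw [hp, Finset.sum_range_succ] at h2
    have hcoef : p.coeff r = 1 := by
      have h3 := (LinearMap.charpoly_monic M).coeff_natDegree
      rwa [← hpdef, hpdeg] at h3
    rw [hcoef, one_smul] at h2
    have h3 := eq_neg_of_add_eq_zero_right h2.symm
    rw [h3, ← Finset.sum_neg_distrib]
    exact Finset.sum_congr rfl fun i _ => (neg_smul _ _).symm
  have hvanish : ∀ m : ℕ, ∀ x, Φ x = 0 → v ((M ^ m) x) = 0 := by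
    intro m
    induction m using Nat.strong_induction_on with
    | _ m ih =>
      intro x hx
      by_cases hm : m < r
      · have := congrFun hx ⟨m, hm⟩
        simpa [hΦapp] using this
      · push_neg at hm
        have hm' : m - r + r = m := by omega
        have hsplit : (M ^ m) x = (M ^ (m - r)) ((M ^ r) x) := by
          conv_lhs => rw [← hm']
          rw [pow_add, Module.End.mul_apply]
        rw [hsplit, hMr]
        simp only [LinearMap.sum_apply, LinearMap.smul_apply, map_sum, map_smul, smul_eq_mul]
        refine Finset.sum_eq_zero fun i hi => ?_
        have hpow : (M ^ (m - r)) ((M ^ i) x) = (M ^ (m - r + i)) x := by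
          rw [pow_add, Module.End.mul_apply]
        rw [hpow, ih (m - r + i) (by have := Finset.mem_range.mp hi; omega) x hx, mul_zero]
  have hΦinj : Function.Injective Φ := by
    rw [← LinearMap.ker_eq_bot]
    by_contra hne
    haveI : Nontrivial (LinearMap.ker Φ) := Submodule.nontrivial_iff_ne_bot.mpr hne
    have hinv : ∀ x ∈ LinearMap.ker Φ, M x ∈ LinearMap.ker Φ := by
      intro x hx
      rw [LinearMap.mem_ker] at hx ⊢
      funext j
      rw [hΦapp]
      have hpow : (M ^ (j : ℕ)) (M x) = (M ^ ((j : ℕ) + 1)) x := by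
        rw [pow_succ, Module.End.mul_apply]
      rw [hpow]
      exact hvanish _ x hx
    obtain ⟨μ, hμ⟩ := Module.End.exists_eigenvalue (M.restrict hinv)
    obtain ⟨x, hx⟩ := hμ.exists_hasEigenvector
    have hMx : M (x : Fin r → ℂ) = μ • (x : Fin r → ℂ) := by
      have h2 := congrArg (Subtype.val) hx.apply_eq_smul
      rw [LinearMap.restrict_coe_apply] at h2
      simpa using h2
    have hvx : v (x : Fin r → ℂ) = 0 := by
      have := hvanish 0 (x : Fin r → ℂ) x.2
      simpa using this
    have hzero : A₂.mulVecLin (x : Fin r → ℂ) = μ • A₁.mulVecLin (x : Fin r → ℂ) := by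
      rw [hdec, hvx, zero_smul, add_zero, hMx, map_smul]
    exact hx.2 (Submodule.coe_eq_zero.mp (hcon μ _ hzero))
  have hΦsurj : Function.Surjective Φ := (LinearMap.injective_iff_surjective).mp hΦinj
  obtain ⟨e₀, he₀⟩ := hΦsurj (Pi.single ⟨r - 1, by omega⟩ 1)
  have he₀' : ∀ m, (hm : m < r) → v ((M ^ m) e₀) = if m = r - 1 then 1 else 0 := by
    intro m hm
    have h2 := congrFun he₀ ⟨m, hm⟩
    rw [hΦapp] at h2
    rw [h2, Pi.single_apply]
    simp [Fin.ext_iff]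
  refine ⟨fun j => (M ^ (j : ℕ)) e₀,
    fun i => A₁.mulVecLin ((M ^ (i : ℕ)) e₀) + (if (i : ℕ) = r then (1 : ℂ) else 0) • w,
    ?_, ?_, ?_⟩
  · -- linear independence
    rw [Fintype.linearIndependent_iff]
    intro c hc
    have hψf : ∀ i : Fin (r + 1),
        ψ (A₁.mulVecLin ((M ^ (i : ℕ)) e₀) + (if (i : ℕ) = r then (1 : ℂ) else 0) • w)
        = if (i : ℕ) = r then 1 else 0 := by
      intro i
      rw [map_add, hψa₁, map_smul, hw, zero_add, smul_eq_mul, mul_one]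
    have hite : (∑ i : Fin (r + 1), c i * (if (i : ℕ) = r then (1 : ℂ) else 0))
        = c (Fin.last r) := by
      rw [Finset.sum_eq_single (Fin.last r)]
      · simp [Fin.val_last]
      · intro b _ hb
        have hbv : (b : ℕ) ≠ r := by
          intro hb'
          exact hb (by rw [Fin.ext_iff, Fin.val_last]; exact hb')
        simp [hbv]
      · intro habs; exact absurd (Finset.mem_univ _) habs
    have hlast : c (Fin.last r) = 0 := by
      have h2 := congrArg ψ hc
      rw [map_sum, map_zero] at h2
      simp only [map_smul, hψf, smul_eq_mul] at h2
      rw [hite] at h2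
      exact h2
    have hsum0 : ∑ i : Fin (r + 1), c i • (M ^ (i : ℕ)) e₀ = 0 := by
      apply ha₁
      rw [map_sum, map_zero]
      simp only [map_smul]
      have hexp : ∑ i : Fin (r + 1), c i • A₁.mulVecLin ((M ^ (i : ℕ)) e₀)
          = (∑ i : Fin (r + 1), c i •
              (A₁.mulVecLin ((M ^ (i : ℕ)) e₀) + (if (i : ℕ) = r then (1 : ℂ) else 0) • w))
            - (∑ i : Fin (r + 1), (c i * (if (i : ℕ) = r then (1 : ℂ) else 0))) • w := by
        rw [Finset.sum_smul, ← Finset.sum_sub_distrib]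
        refine Finset.sum_congr rfl fun i _ => ?_
        rw [smul_add, mul_smul]
        abel
      rw [hexp, hc, hite, hlast, zero_smul, zero_sub, neg_zero]
    have hc' : ∑ j : Fin r, c (Fin.castSucc j) • (M ^ (j : ℕ)) e₀ = 0 := by
      rw [Fin.sum_univ_castSucc, hlast, zero_smul, add_zero] at hsum0
      simpa using hsum0
    have hkey : ∀ m : ℕ, ∀ k : Fin r, r - 1 - (k : ℕ) = m → c (Fin.castSucc k) = 0 := by
      intro m
      induction m using Nat.strong_induction_on with
      | _ m ih =>
        intro k hk
        have happ := congrArg (fun z => v ((M ^ (r - 1 - (k : ℕ))) z)) hc'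
        simp only [map_sum, map_smul, map_zero, smul_eq_mul] at happ
        have hterm : ∀ j : Fin r, v ((M ^ (r - 1 - (k : ℕ))) ((M ^ (j : ℕ)) e₀))
            = v ((M ^ (r - 1 - (k : ℕ) + (j : ℕ))) e₀) := by
          intro j
          rw [pow_add, Module.End.mul_apply]
        simp only [hterm] at happ
        have hmain : ∑ j : Fin r, c (Fin.castSucc j) * v ((M ^ (r - 1 - (k : ℕ) + (j : ℕ))) e₀)
            = c (Fin.castSucc k) := by
          rw [Finset.sum_eq_single k]
          · have hexp : r - 1 - (k : ℕ) + (k : ℕ) = r - 1 := by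
              have := k.isLt; omega
            rw [hexp, he₀' (r - 1) (by omega), if_pos rfl, mul_one]
          · intro j _ hj
            have hjk : (j : ℕ) ≠ (k : ℕ) := fun hh => hj (Fin.ext hh)
            by_cases hlt : (j : ℕ) < (k : ℕ)
            · have hb := k.isLt
              rw [he₀' _ (by omega), if_neg (by omega), mul_zero]
            · have hgt : (k : ℕ) < (j : ℕ) := by omega
              rw [ih (r - 1 - (j : ℕ)) (by have := j.isLt; omega) j rfl, zero_mul]
          · intro habs; exact absurd (Finset.mem_univ _) habs
        rw [hmain] at happ
        exact happ
    intro i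
    by_cases hi : (i : ℕ) = r
    · have : i = Fin.last r := Fin.ext (by rw [hi, Fin.val_last])
      rw [this]; exact hlast
    · have hi' : (i : ℕ) < r := by have := i.isLt; omega
      have : i = Fin.castSucc ⟨(i : ℕ), hi'⟩ := Fin.ext rfl
      rw [this]
      exact hkey _ ⟨(i : ℕ), hi'⟩ rfl
  · -- A₁ e j = f (castSucc j)
    intro j
    have hj : ((Fin.castSucc j : Fin (r + 1)) : ℕ) = (j : ℕ) := rfl
    simp [hj, j.isLt.ne]
  · -- A₂ e j = f (succ j)
    intro j
    rw [hdec ((M ^ (j : ℕ)) e₀)]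
    have h1 : M ((M ^ (j : ℕ)) e₀) = (M ^ ((j : ℕ) + 1)) e₀ := by
      rw [pow_succ', Module.End.mul_apply]
    have h2 : v ((M ^ (j : ℕ)) e₀) = if (j : ℕ) + 1 = r then 1 else 0 := by
      rw [he₀' _ j.isLt]
      by_cases hj : (j : ℕ) = r - 1
      · rw [if_pos hj, if_pos (by omega)]
      · rw [if_neg hj, if_neg (by omega)]
    rw [h1, h2]
    simp [Fin.val_succ]

/-- Kronecker normal form: if `A₁ x₁ + A₂ x₂` is injective (as a linear map ℂʳ → ℂʳ⁺¹)
for every `(x₁, x₂) ≠ 0`, then the pair `(A₁, A₂)` lies in the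
`GL(r+1,ℂ) × GL(r,ℂ)`-orbit of the pair `(S, T)` with `Sᵢⱼ = δᵢⱼ`, `Tᵢⱼ = δ_{i,j+1}`. -/
theorem kronecker_normal_form (r : ℕ) (A₁ A₂ : Matrix (Fin (r + 1)) (Fin r) ℂ)
    (h : ∀ x : ℂ × ℂ, x ≠ 0 →
      Function.Injective (Matrix.mulVecLin (x.1 • A₁ + x.2 • A₂))) :
    ∃ (P : Matrix (Fin (r + 1)) (Fin (r + 1)) ℂ) (Q : Matrix (Fin r) (Fin r) ℂ),
      IsUnit P ∧ IsUnit Q ∧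
      P * A₁ * Q = Matrix.of (fun (i : Fin (r + 1)) (j : Fin r) => if (i : ℕ) = (j : ℕ) then 1 else 0) ∧
      P * A₂ * Q = Matrix.of (fun (i : Fin (r + 1)) (j : Fin r) => if (i : ℕ) = (j : ℕ) + 1 then 1 else 0) := by
  rcases Nat.eq_zero_or_pos r with hr | hr
  · subst hr
    refine ⟨1, 1, isUnit_one, isUnit_one, ?_, ?_⟩ <;>
      · apply Matrix.ext; intro i j; exact j.elim0
  · obtain ⟨e, f, hfind, h1, h2⟩ := exists_kronecker_chain r hr A₁ A₂ h
    set F : Matrix (Fin (r + 1)) (Fin (r + 1)) ℂ := Matrix.of (fun i k => f k i) with hF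
    set Q : Matrix (Fin r) (Fin r) ℂ := Matrix.of (fun i j => e j i) with hQ
    have hFunit : IsUnit F := by
      rw [← Matrix.linearIndependent_cols_iff_isUnit]
      exact hfind
    have heind : LinearIndependent ℂ e := by
      have hcomp : LinearIndependent ℂ (A₁.mulVecLin ∘ e) := by
        have hfe : A₁.mulVecLin ∘ e = f ∘ Fin.castSucc := by
          funext j; exact h1 j
        rw [hfe]
        exact hfind.comp _ (Fin.castSucc_injective r)
      exact LinearIndependent.of_comp A₁.mulVecLin hcomp
    have hQunit : IsUnit Q := by
      rw [← Matrix.linearIndependent_cols_iff_isUnit]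
      exact heind
    have hmulQ : ∀ (A : Matrix (Fin (r + 1)) (Fin r) ℂ) (i : Fin (r + 1)) (j : Fin r),
        (A * Q) i j = A.mulVecLin (e j) i := by
      intro A i j
      rw [Matrix.mul_apply, Matrix.mulVecLin_apply]
      simp [Matrix.mulVec, dotProduct, hQ]
    have hA1Q : A₁ * Q = F * (Matrix.of fun (i : Fin (r + 1)) (j : Fin r) =>
        if (i : ℕ) = (j : ℕ) then (1 : ℂ) else 0) := by
      ext i j
      rw [hmulQ, h1, Matrix.mul_apply]
      rw [Finset.sum_eq_single (Fin.castSucc j)]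
      · simp [hF]
      · intro k _ hk
        have : (k : ℕ) ≠ (j : ℕ) := fun hh => hk (Fin.ext hh)
        simp [this]
      · intro habs; exact absurd (Finset.mem_univ _) habs
    have hA2Q : A₂ * Q = F * (Matrix.of fun (i : Fin (r + 1)) (j : Fin r) =>
        if (i : ℕ) = (j : ℕ) + 1 then (1 : ℂ) else 0) := by
      ext i j
      rw [hmulQ, h2, Matrix.mul_apply]
      rw [Finset.sum_eq_single (Fin.succ j)]
      · simp [hF, Fin.val_succ]
      · intro k _ hk
        have : (k : ℕ) ≠ (j : ℕ) + 1 := fun hh => hk (Fin.ext (by rw [hh, Fin.val_succ]))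
        simp [this]
      · intro habs; exact absurd (Finset.mem_univ _) habs
    have hFdet : IsUnit F.det := Matrix.isUnit_iff_isUnit_det F |>.mp hFunit
    refine ⟨F⁻¹, Q, Matrix.isUnit_nonsing_inv_iff.mpr hFunit, hQunit, ?_, ?_⟩
    · rw [Matrix.mul_assoc, hA1Q, ← Matrix.mul_assoc, Matrix.nonsing_inv_mul F hFdet,
        Matrix.one_mul]
    · rw [Matrix.mul_assoc, hA2Q, ← Matrix.mul_assoc, Matrix.nonsing_inv_mul F hFdet,
        Matrix.one_mul]
end

section
/- Let S, T be the (r+1)×r complex matrices with S_{ij} = δ_{ij} and T_{ij} = δ_{i,j+1}. Then the stabilizer of the pair (S,T) under the action (P,Q)·(A₁,A₂) = (P A₁ Q, P A₂ Q) of GL(r+1,ℂ)×GL(r,ℂ) is exactly the central subgroup Δ = {(z·Id_{r+1}, z⁻¹·Id_r) : z ∈ ℂ*}. -/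
/-!
If `(P, Q)` fixes `(S, T)`, then `N = P⁻¹` satisfies `N S = S Q` and `N T = T Q`. Since `S` and
`T` are the identity with its last, resp. first, column deleted, comparing entries shows that `N`
is Toeplitz (constant along diagonals), that its first row vanishes off the diagonal and so does
its last row. Such a matrix is scalar, `N = c • 1`; reading the top `r` rows of `N S = S Q` then
gives `Q = c • 1`, and `P = c⁻¹ • 1`.
-/

open Matrix

section Toeplitz

variable {α : Type*} {r : ℕ}

def IsToeplitz (P : Matrix (Fin (r + 1)) (Fin (r + 1)) α) : Prop :=
  ∀ i j : Fin r, P i.succ j.succ = P i.castSucc j.castSucc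

namespace IsToeplitz

variable {P : Matrix (Fin (r + 1)) (Fin (r + 1)) α}

lemma apply_self (hP : IsToeplitz P) (i : Fin (r + 1)) : P i i = P 0 0 := by
  induction i using Fin.induction with
  | zero => rfl
  | succ i ih => rw [hP, ih]

lemma apply_eq_zero_of_lt [Zero α] (hP : IsToeplitz P) (hfirst : ∀ j : Fin r, P 0 j.succ = 0)
    {i j : Fin (r + 1)} (hij : i < j) : P i j = 0 := by
  induction i using Fin.induction generalizing j with
  | zero =>
    obtain ⟨j, rfl⟩ := Fin.exists_succ_eq.2 hij.ne'
    exact hfirst j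
  | succ i ih =>
    obtain ⟨j, rfl⟩ := Fin.exists_succ_eq.2 ((Fin.succ_pos i).trans hij).ne'
    rw [hP]
    exact ih (by simpa using hij)

lemma apply_eq_zero_of_gt [Zero α] (hP : IsToeplitz P)
    (hlast : ∀ j : Fin r, P (Fin.last r) j.castSucc = 0)
    {i j : Fin (r + 1)} (hji : j < i) : P i j = 0 := by
  induction i using Fin.reverseInduction generalizing j with
  | last =>
    obtain ⟨j, rfl⟩ := Fin.exists_castSucc_eq.2 hji.ne
    exact hlast j
  | cast i ih =>
    obtain ⟨j, rfl⟩ := Fin.exists_castSucc_eq.2 (hji.trans (Fin.castSucc_lt_last i)).ne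
    rw [← hP]
    exact ih (by simpa using hji)

lemma eq_smul_one [MulZeroOneClass α] (hP : IsToeplitz P) (hfirst : ∀ j : Fin r, P 0 j.succ = 0)
    (hlast : ∀ j : Fin r, P (Fin.last r) j.castSucc = 0) : P = P 0 0 • 1 := by
  ext i j
  rcases lt_trichotomy i j with h | rfl | h
  · simp [h.ne, hP.apply_eq_zero_of_lt hfirst h]
  · simp [hP.apply_self]
  · simp [h.ne', hP.apply_eq_zero_of_gt hlast h]

end IsToeplitz

end Toeplitz

section Kronecker

variable (R : Type*) [Semiring R] (r : ℕ)

def kroneckerS : Matrix (Fin (r + 1)) (Fin r) R :=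
  (1 : Matrix (Fin (r + 1)) (Fin (r + 1)) R).submatrix id Fin.castSucc

def kroneckerT : Matrix (Fin (r + 1)) (Fin r) R :=
  (1 : Matrix (Fin (r + 1)) (Fin (r + 1)) R).submatrix id Fin.succ

variable {R r}

@[simp] lemma mul_kroneckerS_apply (N : Matrix (Fin (r + 1)) (Fin (r + 1)) R) (i : Fin (r + 1))
    (j : Fin r) : (N * kroneckerS R r) i j = N i j.castSucc := by
  simp [kroneckerS, mul_apply, one_apply]

@[simp] lemma mul_kroneckerT_apply (N : Matrix (Fin (r + 1)) (Fin (r + 1)) R) (i : Fin (r + 1))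
    (j : Fin r) : (N * kroneckerT R r) i j = N i j.succ := by
  simp [kroneckerT, mul_apply, one_apply]

@[simp] lemma kroneckerS_mul_apply_castSucc (M : Matrix (Fin r) (Fin r) R) (i j : Fin r) :
    (kroneckerS R r * M) i.castSucc j = M i j := by
  simp [kroneckerS, mul_apply, one_apply]

@[simp] lemma kroneckerS_mul_apply_last (M : Matrix (Fin r) (Fin r) R) (j : Fin r) :
    (kroneckerS R r * M) (Fin.last r) j = 0 := by
  simp [kroneckerS, mul_apply, one_apply, (Fin.castSucc_lt_last _).ne']

@[simp] lemma kroneckerT_mul_apply_succ (M : Matrix (Fin r) (Fin r) R) (i j : Fin r) :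
    (kroneckerT R r * M) i.succ j = M i j := by
  simp [kroneckerT, mul_apply, one_apply]

@[simp] lemma kroneckerT_mul_apply_zero (M : Matrix (Fin r) (Fin r) R) (j : Fin r) :
    (kroneckerT R r * M) 0 j = 0 := by
  simp [kroneckerT, mul_apply, one_apply, (Fin.succ_ne_zero _).symm]

theorem eq_smul_one_of_intertwines_kronecker {N : Matrix (Fin (r + 1)) (Fin (r + 1)) R}
    {M : Matrix (Fin r) (Fin r) R} (hS : N * kroneckerS R r = kroneckerS R r * M)
    (hT : N * kroneckerT R r = kroneckerT R r * M) : N = N 0 0 • 1 ∧ M = N 0 0 • 1 := by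
  have hM : ∀ i j, M i j = N i.castSucc j.castSucc := fun i j => by
    simpa using (congr_fun₂ hS i.castSucc j).symm
  have hN : N = N 0 0 • 1 := by
    refine IsToeplitz.eq_smul_one (fun i j => ?_) (fun j => ?_) (fun j => ?_)
    · simpa [hM] using congr_fun₂ hT i.succ j
    · simpa using congr_fun₂ hT 0 j
    · simpa using congr_fun₂ hS (Fin.last r) j
  refine ⟨hN, ?_⟩
  ext i j
  rw [hM, hN]
  simp [one_apply]

end Kronecker

lemma Matrix.units_inv_mul_eq_mul_of_mul_mul_eq {m n R : Type*} [Fintype m] [DecidableEq m]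
    [Fintype n] [Semiring R] (u : (Matrix m m R)ˣ) {A : Matrix m n R} {Q : Matrix n n R}
    (h : (u : Matrix m m R) * A * Q = A) : (↑u⁻¹ : Matrix m m R) * A = A * Q := by
  conv_lhs => rw [← h]
  simp [← Matrix.mul_assoc]

theorem stabiliser_of_kronecker_pair_general (r : ℕ)
    (S T : Matrix (Fin (r + 1)) (Fin r) ℂ)
    (hS : S = Matrix.of (fun (i : Fin (r + 1)) (j : Fin r) =>
      if (i : ℕ) = (j : ℕ) then 1 else 0))
    (hT : T = Matrix.of (fun (i : Fin (r + 1)) (j : Fin r) =>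
      if (i : ℕ) = (j : ℕ) + 1 then 1 else 0))
    (P : Matrix (Fin (r + 1)) (Fin (r + 1)) ℂ) (Q : Matrix (Fin r) (Fin r) ℂ)
    (hP : IsUnit P) :
    (P * S * Q = S ∧ P * T * Q = T) ↔
      ∃ z : ℂˣ, P = (z : ℂ) • (1 : Matrix (Fin (r + 1)) (Fin (r + 1)) ℂ) ∧
        Q = ((z⁻¹ : ℂˣ) : ℂ) • (1 : Matrix (Fin r) (Fin r) ℂ) := by
  obtain rfl : S = kroneckerS ℂ r := by
    ext i j
    simp [hS, kroneckerS, one_apply, Fin.ext_iff]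
  obtain rfl : T = kroneckerT ℂ r := by
    ext i j
    simp [hT, kroneckerT, one_apply, Fin.ext_iff]
  constructor
  · rintro ⟨hPS, hPT⟩
    obtain ⟨u, rfl⟩ := hP
    obtain ⟨hu, hQ⟩ := eq_smul_one_of_intertwines_kronecker
      (units_inv_mul_eq_mul_of_mul_mul_eq u hPS) (units_inv_mul_eq_mul_of_mul_mul_eq u hPT)
    set c := (↑u⁻¹ : Matrix (Fin (r + 1)) (Fin (r + 1)) ℂ) 0 0
    have hcu : c • (u : Matrix (Fin (r + 1)) (Fin (r + 1)) ℂ) = 1 := by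
      rw [← u.inv_mul, hu, smul_mul, Matrix.one_mul]
    have hc : c ≠ 0 := by
      rintro hc
      simp [hc] at hcu
    refine ⟨(Units.mk0 c hc)⁻¹, ?_, by simpa using hQ⟩
    simpa [eq_inv_smul_iff₀ hc] using hcu
  · rintro ⟨z, rfl, rfl⟩
    constructor <;> simp [smul_smul]

/-- The stabiliser of the Kronecker pair `(S, T)` (with `Sᵢⱼ = δᵢⱼ`, `Tᵢⱼ = δ_{i,j+1}`,
of size `(r+1) × r`) under the action `(P,Q)·(A₁,A₂) = (P A₁ Q, P A₂ Q)` of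
`GL(r+1,ℂ) × GL(r,ℂ)` is exactly the central subgroup `Δ = {(z·Id, z⁻¹·Id) : z ∈ ℂ*}`. -/
theorem stabiliser_of_kronecker_pair (r : ℕ)
    (S T : Matrix (Fin (r + 1)) (Fin r) ℂ)
    (hS : S = Matrix.of (fun (i : Fin (r + 1)) (j : Fin r) =>
      if (i : ℕ) = (j : ℕ) then 1 else 0))
    (hT : T = Matrix.of (fun (i : Fin (r + 1)) (j : Fin r) =>
      if (i : ℕ) = (j : ℕ) + 1 then 1 else 0))
    (P : Matrix (Fin (r + 1)) (Fin (r + 1)) ℂ) (Q : Matrix (Fin r) (Fin r) ℂ)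
    (hP : IsUnit P) (hQ : IsUnit Q) :
    (P * S * Q = S ∧ P * T * Q = T) ↔
      ∃ z : ℂˣ, P = (z : ℂ) • (1 : Matrix (Fin (r + 1)) (Fin (r + 1)) ℂ) ∧
        Q = ((z⁻¹ : ℂˣ) : ℂ) • (1 : Matrix (Fin r) (Fin r) ℂ) :=
  stabiliser_of_kronecker_pair_general r S T hS hT P Q hP
end
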